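/- For every integer n ≥ 2, the harmonic sum ∑_{k≥1} H_k³/(k+1)^n equals ζ(n,3) + 3ζ(n,2,1) + 3ζ(n,1,2) + 6ζ(n,1,1,1). -/

import Mathlib

open Finset ENNReal

noncomputable def HH (m : ℕ) : ℝ≥0∞ := ∑ j ∈ Finset.Ico 1 m, ((j : ℝ≥0∞))⁻¹
noncomputable def QQ (m : ℕ) : ℝ≥0∞ := ∑ j ∈ Finset.Ico 1 m, ((j : ℝ≥0∞))⁻¹ ^ 2
noncomputable def SS (m : ℕ) : ℝ≥0∞ := ∑ j ∈ Finset.Ico 1 m, ((j : ℝ≥0∞))⁻¹ * HH j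

lemma HH_succ {m : ℕ} (hm : 1 ≤ m) : HH (m + 1) = HH m + ((m : ℝ≥0∞))⁻¹ := by
  simp [HH, Finset.sum_Ico_succ_top hm]

lemma sq_ident (m : ℕ) :
    (HH m) ^ 2 = 2 * ∑ j ∈ Finset.Ico 1 m, ((j : ℝ≥0∞))⁻¹ * HH j + QQ m := by
  induction m with
  | zero => simp [HH, QQ]
  | succ m ih =>
    rcases Nat.eq_zero_or_pos m with rfl | hm
    · simp [HH, QQ]
    · rw [HH_succ hm, QQ, Finset.sum_Ico_succ_top hm, Finset.sum_Ico_succ_top hm, ← QQ]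
      have : (HH m + (m : ℝ≥0∞)⁻¹) ^ 2
          = HH m ^ 2 + (2 * ((m:ℝ≥0∞)⁻¹ * HH m) + ((m:ℝ≥0∞))⁻¹ ^ 2) := by ring
      rw [this, ih]; ring

lemma cube_ident (m : ℕ) :
    (HH m) ^ 3 = (∑ j ∈ Finset.Ico 1 m, ((j : ℝ≥0∞))⁻¹ ^ 3)
      + 3 * ∑ i ∈ Finset.Ico 1 m, ((i : ℝ≥0∞))⁻¹ ^ 2 * HH i
      + 3 * ∑ i ∈ Finset.Ico 1 m, ((i : ℝ≥0∞))⁻¹ * QQ i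
      + 6 * ∑ i ∈ Finset.Ico 1 m, ((i : ℝ≥0∞))⁻¹ * SS i := by
  induction m with
  | zero => simp [HH]
  | succ m ih =>
    rcases Nat.eq_zero_or_pos m with rfl | hm
    · simp [HH]
    · rw [HH_succ hm, Finset.sum_Ico_succ_top hm, Finset.sum_Ico_succ_top hm,
        Finset.sum_Ico_succ_top hm, Finset.sum_Ico_succ_top hm]
      have expand : (HH m + ((m:ℝ≥0∞))⁻¹) ^ 3
          = HH m ^ 3 + 3 * ((m:ℝ≥0∞))⁻¹ * (HH m) ^ 2 + 3 * ((m:ℝ≥0∞))⁻¹ ^ 2 * HH m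
            + ((m:ℝ≥0∞))⁻¹ ^ 3 := by ring
      rw [expand, ih, sq_ident m, ← SS]; ring

lemma ofReal_one_div_mul {a b : ℝ} (ha : 0 < a) (hb : 0 < b) :
    ENNReal.ofReal (1/(a*b)) = ENNReal.ofReal (1/a) * ENNReal.ofReal (1/b) := by
  rw [← ENNReal.ofReal_mul (by positivity)]
  rw [div_mul_div_comm, one_mul]

lemma ofReal_one_div_nat_pow (x p : ℕ) (hx : x ≠ 0) :
    ENNReal.ofReal (1/((x:ℝ)^p)) = ((x:ℝ≥0∞))⁻¹ ^ p := by
  rw [one_div, ENNReal.ofReal_inv_of_pos (by positivity),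
    ENNReal.ofReal_pow (by positivity), ENNReal.ofReal_natCast, ENNReal.inv_pow]

lemma ofReal_one_div_nat (x : ℕ) (hx : x ≠ 0) :
    ENNReal.ofReal (1/((x:ℝ))) = ((x:ℝ≥0∞))⁻¹ := by
  rw [one_div, ENNReal.ofReal_inv_of_pos (by positivity), ENNReal.ofReal_natCast]

lemma tsum_ite_zero {α : Type*} (c : α → Prop) [DecidablePred c] (f : α → ℝ≥0∞)
    (h : ∀ a, ¬ c a) : (∑' a, if c a then f a else 0) = 0 := by
  have : ∀ a, (if c a then f a else 0) = 0 := fun a => if_neg (h a)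
  simp only [this, tsum_zero]

lemma fiber1 (n : ℕ) :
    (∑' p : ℕ × ℕ, if 1 ≤ p.2 ∧ p.2 < p.1 then
        ENNReal.ofReal ((1 : ℝ) / ((p.1 : ℝ) ^ n * (p.2 : ℝ) ^ 3)) else 0)
      = ∑' m : ℕ, ((m:ℝ≥0∞))⁻¹ ^ n * ∑ j ∈ Finset.Ico 1 m, ((j:ℝ≥0∞))⁻¹ ^ 3 := by
  rw [ENNReal.tsum_prod']
  refine tsum_congr fun m => ?_
  rw [tsum_eq_sum (s := Finset.Ico 1 m)
    (by intro j hj; rw [if_neg]; simp only [Finset.mem_Ico] at hj; (try dsimp only); omega), Finset.mul_sum]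
  refine Finset.sum_congr rfl fun j hj => ?_
  simp only [Finset.mem_Ico] at hj
  have hm0 : m ≠ 0 := by omega
  have hj0 : j ≠ 0 := by omega
  rw [if_pos ⟨hj.1, hj.2⟩, ofReal_one_div_mul (by positivity) (by positivity),
    ofReal_one_div_nat_pow m n hm0, ofReal_one_div_nat_pow j 3 hj0]

lemma fiber2 (n : ℕ) :
    (∑' t : ℕ × ℕ × ℕ, if 1 ≤ t.2.2 ∧ t.2.2 < t.2.1 ∧ t.2.1 < t.1 then
        ENNReal.ofReal ((1 : ℝ) / ((t.1 : ℝ) ^ n * (t.2.1 : ℝ) ^ 2 * (t.2.2 : ℝ))) else 0)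
      = ∑' m : ℕ, ((m:ℝ≥0∞))⁻¹ ^ n * ∑ i ∈ Finset.Ico 1 m, ((i:ℝ≥0∞))⁻¹ ^ 2 * HH i := by
  rw [ENNReal.tsum_prod']
  refine tsum_congr fun m => ?_
  rw [ENNReal.tsum_prod']
  rw [tsum_eq_sum (s := Finset.Ico 1 m)
    (by
      intro i hi; simp only [Finset.mem_Ico] at hi
      exact tsum_ite_zero _ _ fun j => by (try dsimp only); omega), Finset.mul_sum]
  refine Finset.sum_congr rfl fun i hi => ?_
  simp only [Finset.mem_Ico] at hi
  rw [tsum_eq_sum (s := Finset.Ico 1 i)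
    (by intro j hj; rw [if_neg]; simp only [Finset.mem_Ico] at hj; (try dsimp only); omega)]
  rw [HH, Finset.mul_sum, Finset.mul_sum]
  refine Finset.sum_congr rfl fun j hj => ?_
  simp only [Finset.mem_Ico] at hj
  have hm0 : m ≠ 0 := by omega
  have hi0 : i ≠ 0 := by omega
  have hj0 : j ≠ 0 := by omega
  rw [if_pos ⟨hj.1, hj.2, hi.2⟩, ofReal_one_div_mul (by positivity) (by positivity),
    ofReal_one_div_mul (by positivity) (by positivity),
    ofReal_one_div_nat_pow m n hm0, ofReal_one_div_nat_pow i 2 hi0,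
    ofReal_one_div_nat j hj0, mul_assoc]

lemma fiber3 (n : ℕ) :
    (∑' t : ℕ × ℕ × ℕ, if 1 ≤ t.2.2 ∧ t.2.2 < t.2.1 ∧ t.2.1 < t.1 then
        ENNReal.ofReal ((1 : ℝ) / ((t.1 : ℝ) ^ n * (t.2.1 : ℝ) * (t.2.2 : ℝ) ^ 2)) else 0)
      = ∑' m : ℕ, ((m:ℝ≥0∞))⁻¹ ^ n * ∑ i ∈ Finset.Ico 1 m, ((i:ℝ≥0∞))⁻¹ * QQ i := by
  rw [ENNReal.tsum_prod']
  refine tsum_congr fun m => ?_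
  rw [ENNReal.tsum_prod']
  rw [tsum_eq_sum (s := Finset.Ico 1 m)
    (by
      intro i hi; simp only [Finset.mem_Ico] at hi
      exact tsum_ite_zero _ _ fun j => by (try dsimp only); omega), Finset.mul_sum]
  refine Finset.sum_congr rfl fun i hi => ?_
  simp only [Finset.mem_Ico] at hi
  rw [tsum_eq_sum (s := Finset.Ico 1 i)
    (by intro j hj; rw [if_neg]; simp only [Finset.mem_Ico] at hj; (try dsimp only); omega)]
  rw [QQ, Finset.mul_sum, Finset.mul_sum]
  refine Finset.sum_congr rfl fun j hj => ?_
  simp only [Finset.mem_Ico] at hj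
  have hm0 : m ≠ 0 := by omega
  have hi0 : i ≠ 0 := by omega
  have hj0 : j ≠ 0 := by omega
  rw [if_pos ⟨hj.1, hj.2, hi.2⟩, ofReal_one_div_mul (by positivity) (by positivity),
    ofReal_one_div_mul (by positivity) (by positivity),
    ofReal_one_div_nat_pow m n hm0, ofReal_one_div_nat i hi0,
    ofReal_one_div_nat_pow j 2 hj0, mul_assoc]

lemma fiber4 (n : ℕ) :
    (∑' q : ℕ × ℕ × ℕ × ℕ,
        if 1 ≤ q.2.2.2 ∧ q.2.2.2 < q.2.2.1 ∧ q.2.2.1 < q.2.1 ∧ q.2.1 < q.1 then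
        ENNReal.ofReal ((1 : ℝ) / ((q.1 : ℝ) ^ n * (q.2.1 : ℝ) * (q.2.2.1 : ℝ) * (q.2.2.2 : ℝ)))
        else 0)
      = ∑' m : ℕ, ((m:ℝ≥0∞))⁻¹ ^ n * ∑ i ∈ Finset.Ico 1 m, ((i:ℝ≥0∞))⁻¹ * SS i := by
  rw [ENNReal.tsum_prod']
  refine tsum_congr fun m => ?_
  rw [ENNReal.tsum_prod']
  rw [tsum_eq_sum (s := Finset.Ico 1 m)
    (by
      intro i hi; simp only [Finset.mem_Ico] at hi
      rw [ENNReal.tsum_prod']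
      have : ∀ j : ℕ, (∑' l : ℕ, if 1 ≤ l ∧ l < j ∧ j < i ∧ i < m then
          ENNReal.ofReal ((1 : ℝ) / ((m : ℝ) ^ n * (i : ℝ) * (j : ℝ) * (l : ℝ))) else 0) = 0 :=
        fun j => tsum_ite_zero _ _ fun l => by (try dsimp only); omega
      simp only [this, tsum_zero]), Finset.mul_sum]
  refine Finset.sum_congr rfl fun i hi => ?_
  simp only [Finset.mem_Ico] at hi
  rw [ENNReal.tsum_prod']
  rw [tsum_eq_sum (s := Finset.Ico 1 i)
    (by
      intro j hj; simp only [Finset.mem_Ico] at hj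
      exact tsum_ite_zero _ _ fun l => by (try dsimp only); omega)]
  rw [SS, Finset.mul_sum, Finset.mul_sum]
  refine Finset.sum_congr rfl fun j hj => ?_
  simp only [Finset.mem_Ico] at hj
  rw [tsum_eq_sum (s := Finset.Ico 1 j)
    (by intro l hl; rw [if_neg]; simp only [Finset.mem_Ico] at hl; (try dsimp only); omega)]
  rw [HH, Finset.mul_sum, Finset.mul_sum, Finset.mul_sum]
  refine Finset.sum_congr rfl fun l hl => ?_
  simp only [Finset.mem_Ico] at hl
  have hm0 : m ≠ 0 := by omega
  have hi0 : i ≠ 0 := by omega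
  have hj0 : j ≠ 0 := by omega
  have hl0 : l ≠ 0 := by omega
  rw [if_pos ⟨hl.1, hl.2, hj.2, hi.2⟩, ofReal_one_div_mul (by positivity) (by positivity),
    ofReal_one_div_mul (by positivity) (by positivity),
    ofReal_one_div_mul (by positivity) (by positivity),
    ofReal_one_div_nat_pow m n hm0, ofReal_one_div_nat i hi0,
    ofReal_one_div_nat j hj0, ofReal_one_div_nat l hl0]
  ring

lemma lhs_link (n k : ℕ) :
    ENNReal.ofReal ((∑ j ∈ Finset.Icc 1 (k + 1), (1 : ℝ) / j) ^ 3 / ((k : ℝ) + 2) ^ n)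
      = HH (k + 2) ^ 3 * (((k + 2 : ℕ)) : ℝ≥0∞)⁻¹ ^ n := by
  have hx : ((k : ℝ) + 2) = ((k + 2 : ℕ) : ℝ) := by push_cast; ring
  have hs : ENNReal.ofReal (∑ j ∈ Finset.Icc 1 (k + 1), (1 : ℝ) / j) = HH (k + 2) := by
    rw [HH, ← Finset.Ico_add_one_right_eq_Icc]
    rw [ENNReal.ofReal_sum_of_nonneg (fun j _ => by positivity)]
    refine Finset.sum_congr rfl fun j hj => ?_
    simp only [Finset.mem_Ico] at hj
    exact ofReal_one_div_nat j (by omega)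
  rw [div_eq_mul_one_div, ENNReal.ofReal_mul (by positivity), hx,
    ofReal_one_div_nat_pow _ n (by omega), ENNReal.ofReal_pow (by positivity), hs]

lemma shift (n : ℕ) :
    (∑' k : ℕ, HH (k + 2) ^ 3 * (((k + 2 : ℕ)) : ℝ≥0∞)⁻¹ ^ n)
      = ∑' m : ℕ, HH m ^ 3 * ((m : ℝ≥0∞))⁻¹ ^ n := by
  refine Function.Injective.tsum_eq (f := fun m : ℕ => HH m ^ 3 * ((m : ℝ≥0∞))⁻¹ ^ n) (g := fun k : ℕ => k + 2)
    (fun a b h => by dsimp only at h; omega) ?_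
  intro m hm
  rcases Nat.lt_or_ge m 2 with h | h
  · exfalso
    apply hm
    interval_cases m <;> simp [HH]
  · exact ⟨m - 2, by dsimp only; omega⟩

lemma summable_main (n : ℕ) (hn : 2 ≤ n) :
    Summable (fun k : ℕ =>
      (∑ j ∈ Finset.Icc 1 (k + 1), (1 : ℝ) / j) ^ 3 / ((k : ℝ) + 2) ^ n) := by
  have hmaj : Summable (fun k : ℕ => 343 * ((((k : ℝ) + 2)) ^ ((3:ℝ)/2))⁻¹) := by
    have hs : Summable (fun k : ℕ => (((k : ℝ)) ^ ((3:ℝ)/2))⁻¹) :=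
      Real.summable_nat_rpow_inv.mpr (by norm_num)
    have hs2 := (summable_nat_add_iff 2).mpr hs
    refine ((hs2.congr fun k => ?_).mul_left 343)
    push_cast; ring_nf
  refine Summable.of_nonneg_of_le (fun k => by positivity) (fun k => ?_) hmaj
  set x : ℝ := (k : ℝ) + 2 with hxdef
  have hx0 : (0:ℝ) < x := by positivity
  have hx1 : (1:ℝ) ≤ x := by rw [hxdef]; have h0 : (0:ℝ) ≤ (k:ℝ) := Nat.cast_nonneg k; linarith
  have hH : (∑ j ∈ Finset.Icc 1 (k + 1), (1 : ℝ) / j) = ((harmonic (k+1) : ℚ) : ℝ) := by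
    rw [harmonic_eq_sum_Icc]; push_cast; simp [one_div]
  have hHnn : (0:ℝ) ≤ ∑ j ∈ Finset.Icc 1 (k + 1), (1 : ℝ) / j := by positivity
  have h1 : ((harmonic (k+1) : ℚ) : ℝ) ≤ 1 + Real.log ((k+1 : ℕ) : ℝ) :=
    harmonic_le_one_add_log (k+1)
  have h2 : Real.log ((k+1 : ℕ) : ℝ) ≤ Real.log x :=
    Real.log_le_log (by positivity) (by push_cast; linarith)
  have hrp : (0:ℝ) < x ^ ((1:ℝ)/6) := Real.rpow_pos_of_pos hx0 _
  have hrp1 : (1:ℝ) ≤ x ^ ((1:ℝ)/6) := Real.one_le_rpow hx1 (by norm_num)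
  have hlog : Real.log x ≤ 6 * x ^ ((1:ℝ)/6) := by
    have e : Real.log x = 6 * Real.log (x ^ ((1:ℝ)/6)) := by
      rw [Real.log_rpow hx0]; ring
    have := Real.log_le_sub_one_of_pos hrp
    rw [e]; nlinarith
  have hHb : (∑ j ∈ Finset.Icc 1 (k + 1), (1 : ℝ) / j) ≤ 7 * x ^ ((1:ℝ)/6) := by
    rw [hH]; nlinarith
  have hcube : (x ^ ((1:ℝ)/6)) ^ (3:ℕ) = x ^ ((1:ℝ)/2) := by
    rw [← Real.rpow_natCast (x ^ ((1:ℝ)/6)) 3, ← Real.rpow_mul hx0.le]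
    norm_num
  have hH3 : (∑ j ∈ Finset.Icc 1 (k + 1), (1 : ℝ) / j) ^ 3 ≤ 343 * x ^ ((1:ℝ)/2) := by
    calc (∑ j ∈ Finset.Icc 1 (k + 1), (1 : ℝ) / j) ^ 3
        ≤ (7 * x ^ ((1:ℝ)/6)) ^ 3 := pow_le_pow_left₀ hHnn hHb 3
      _ = 343 * (x ^ ((1:ℝ)/6)) ^ (3:ℕ) := by ring
      _ = 343 * x ^ ((1:ℝ)/2) := by rw [hcube]
  have hden : x ^ (2:ℕ) ≤ x ^ n := pow_le_pow_right₀ hx1 hn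
  calc (∑ j ∈ Finset.Icc 1 (k + 1), (1 : ℝ) / j) ^ 3 / x ^ n
      ≤ (343 * x ^ ((1:ℝ)/2)) / x ^ (2:ℕ) :=
        div_le_div₀ (by positivity) hH3 (by positivity) hden
    _ = 343 * (x ^ ((3:ℝ)/2))⁻¹ := by
        rw [mul_div_assoc]
        congr 1
        rw [← Real.rpow_natCast x 2, ← Real.rpow_sub hx0]
        rw [← Real.rpow_neg hx0.le]
        norm_num

lemma tsum_ofReal_toReal {α : Type*} {f : α → ℝ} (hf : ∀ a, 0 ≤ f a) :
    (∑' a, ENNReal.ofReal (f a)).toReal = ∑' a, f a := by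
  rw [ENNReal.tsum_toReal_eq (fun a => ENNReal.ofReal_ne_top)]
  exact tsum_congr fun a => ENNReal.toReal_ofReal (hf a)

/-- For n ≥ 2, ∑_{k≥1} H_k³/(k+1)ⁿ = ζ(n,3) + 3ζ(n,2,1) + 3ζ(n,1,2) + 6ζ(n,1,1,1). -/
theorem harmonic_sum_cube_eq_mzv (n : ℕ) (hn : 2 ≤ n) :
    (∑' k : ℕ, (∑ j ∈ Finset.Icc 1 (k + 1), (1 : ℝ) / j) ^ 3 / ((k : ℝ) + 2) ^ n)
      = (∑' p : ℕ × ℕ, if 1 ≤ p.2 ∧ p.2 < p.1 then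
            (1 : ℝ) / ((p.1 : ℝ) ^ n * (p.2 : ℝ) ^ 3) else 0)
        + 3 * (∑' t : ℕ × ℕ × ℕ, if 1 ≤ t.2.2 ∧ t.2.2 < t.2.1 ∧ t.2.1 < t.1 then
            (1 : ℝ) / ((t.1 : ℝ) ^ n * (t.2.1 : ℝ) ^ 2 * (t.2.2 : ℝ)) else 0)
        + 3 * (∑' t : ℕ × ℕ × ℕ, if 1 ≤ t.2.2 ∧ t.2.2 < t.2.1 ∧ t.2.1 < t.1 then
            (1 : ℝ) / ((t.1 : ℝ) ^ n * (t.2.1 : ℝ) * (t.2.2 : ℝ) ^ 2) else 0)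
        + 6 * (∑' q : ℕ × ℕ × ℕ × ℕ,
            if 1 ≤ q.2.2.2 ∧ q.2.2.2 < q.2.2.1 ∧ q.2.2.1 < q.2.1 ∧ q.2.1 < q.1 then
            (1 : ℝ) / ((q.1 : ℝ) ^ n * (q.2.1 : ℝ) * (q.2.2.1 : ℝ) * (q.2.2.2 : ℝ)) else 0) := by
  have g_nonneg : ∀ k : ℕ,
      0 ≤ (∑ j ∈ Finset.Icc 1 (k + 1), (1 : ℝ) / j) ^ 3 / ((k : ℝ) + 2) ^ n :=
    fun k => by positivity
  have hg := summable_main n hn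
  -- ENNReal versions
  set T1 : ℝ≥0∞ := ∑' p : ℕ × ℕ, if 1 ≤ p.2 ∧ p.2 < p.1 then
    ENNReal.ofReal ((1 : ℝ) / ((p.1 : ℝ) ^ n * (p.2 : ℝ) ^ 3)) else 0 with hT1
  set T2 : ℝ≥0∞ := ∑' t : ℕ × ℕ × ℕ, if 1 ≤ t.2.2 ∧ t.2.2 < t.2.1 ∧ t.2.1 < t.1 then
    ENNReal.ofReal ((1 : ℝ) / ((t.1 : ℝ) ^ n * (t.2.1 : ℝ) ^ 2 * (t.2.2 : ℝ))) else 0 with hT2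
  set T3 : ℝ≥0∞ := ∑' t : ℕ × ℕ × ℕ, if 1 ≤ t.2.2 ∧ t.2.2 < t.2.1 ∧ t.2.1 < t.1 then
    ENNReal.ofReal ((1 : ℝ) / ((t.1 : ℝ) ^ n * (t.2.1 : ℝ) * (t.2.2 : ℝ) ^ 2)) else 0 with hT3
  set T4 : ℝ≥0∞ := ∑' q : ℕ × ℕ × ℕ × ℕ,
    if 1 ≤ q.2.2.2 ∧ q.2.2.2 < q.2.2.1 ∧ q.2.2.1 < q.2.1 ∧ q.2.1 < q.1 then
    ENNReal.ofReal ((1 : ℝ) / ((q.1 : ℝ) ^ n * (q.2.1 : ℝ) * (q.2.2.1 : ℝ) * (q.2.2.2 : ℝ)))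
    else 0 with hT4
  have key : (∑' k : ℕ, ENNReal.ofReal
      ((∑ j ∈ Finset.Icc 1 (k + 1), (1 : ℝ) / j) ^ 3 / ((k : ℝ) + 2) ^ n))
      = T1 + (3 * T2 + (3 * T3 + 6 * T4)) := by
    rw [tsum_congr (lhs_link n), shift n]
    have e2 : ∀ m : ℕ, HH m ^ 3 * ((m : ℝ≥0∞))⁻¹ ^ n
        = ((m:ℝ≥0∞))⁻¹ ^ n * ∑ j ∈ Finset.Ico 1 m, ((j:ℝ≥0∞))⁻¹ ^ 3
          + (3 * (((m:ℝ≥0∞))⁻¹ ^ n * ∑ i ∈ Finset.Ico 1 m, ((i:ℝ≥0∞))⁻¹ ^ 2 * HH i)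
          + (3 * (((m:ℝ≥0∞))⁻¹ ^ n * ∑ i ∈ Finset.Ico 1 m, ((i:ℝ≥0∞))⁻¹ * QQ i)
          + 6 * (((m:ℝ≥0∞))⁻¹ ^ n * ∑ i ∈ Finset.Ico 1 m, ((i:ℝ≥0∞))⁻¹ * SS i))) := fun m => by
      rw [cube_ident m]; ring
    rw [tsum_congr e2, ENNReal.tsum_add, ENNReal.tsum_add, ENNReal.tsum_add,
      ENNReal.tsum_mul_left, ENNReal.tsum_mul_left, ENNReal.tsum_mul_left,
      ← fiber1 n, ← fiber2 n, ← fiber3 n, ← fiber4 n]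
  have hLfin : (∑' k : ℕ, ENNReal.ofReal
      ((∑ j ∈ Finset.Icc 1 (k + 1), (1 : ℝ) / j) ^ 3 / ((k : ℝ) + 2) ^ n)) ≠ ⊤ := by
    rw [← ENNReal.ofReal_tsum_of_nonneg g_nonneg hg]; exact ENNReal.ofReal_ne_top
  have htot : T1 + (3 * T2 + (3 * T3 + 6 * T4)) ≠ ⊤ := key ▸ hLfin
  have h1f : T1 ≠ ⊤ := ne_top_of_le_ne_top htot (le_add_right le_rfl)
  have h2f : 3 * T2 ≠ ⊤ := ne_top_of_le_ne_top htot (le_add_left (le_add_right le_rfl))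
  have h3f : 3 * T3 ≠ ⊤ :=
    ne_top_of_le_ne_top htot (le_add_left (le_add_left (le_add_right le_rfl)))
  have h4f : 6 * T4 ≠ ⊤ := ne_top_of_le_ne_top htot (le_add_left (le_add_left (le_add_left le_rfl)))
  -- real conversions
  have R1 : (∑' p : ℕ × ℕ, if 1 ≤ p.2 ∧ p.2 < p.1 then
      (1 : ℝ) / ((p.1 : ℝ) ^ n * (p.2 : ℝ) ^ 3) else 0) = T1.toReal := by
    rw [hT1, ← tsum_ofReal_toReal (f := fun p : ℕ × ℕ => if 1 ≤ p.2 ∧ p.2 < p.1 then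
      (1 : ℝ) / ((p.1 : ℝ) ^ n * (p.2 : ℝ) ^ 3) else 0) (fun p => by positivity)]
    congr 1
    refine tsum_congr fun p => ?_
    split_ifs with h
    · rfl
    · exact ENNReal.ofReal_zero
  have R2 : (∑' t : ℕ × ℕ × ℕ, if 1 ≤ t.2.2 ∧ t.2.2 < t.2.1 ∧ t.2.1 < t.1 then
      (1 : ℝ) / ((t.1 : ℝ) ^ n * (t.2.1 : ℝ) ^ 2 * (t.2.2 : ℝ)) else 0) = T2.toReal := by
    rw [hT2, ← tsum_ofReal_toReal (f := fun t : ℕ × ℕ × ℕ =>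
      if 1 ≤ t.2.2 ∧ t.2.2 < t.2.1 ∧ t.2.1 < t.1 then
      (1 : ℝ) / ((t.1 : ℝ) ^ n * (t.2.1 : ℝ) ^ 2 * (t.2.2 : ℝ)) else 0) (fun t => by positivity)]
    congr 1
    refine tsum_congr fun t => ?_
    split_ifs with h
    · rfl
    · exact ENNReal.ofReal_zero
  have R3 : (∑' t : ℕ × ℕ × ℕ, if 1 ≤ t.2.2 ∧ t.2.2 < t.2.1 ∧ t.2.1 < t.1 then
      (1 : ℝ) / ((t.1 : ℝ) ^ n * (t.2.1 : ℝ) * (t.2.2 : ℝ) ^ 2) else 0) = T3.toReal := by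
    rw [hT3, ← tsum_ofReal_toReal (f := fun t : ℕ × ℕ × ℕ =>
      if 1 ≤ t.2.2 ∧ t.2.2 < t.2.1 ∧ t.2.1 < t.1 then
      (1 : ℝ) / ((t.1 : ℝ) ^ n * (t.2.1 : ℝ) * (t.2.2 : ℝ) ^ 2) else 0) (fun t => by positivity)]
    congr 1
    refine tsum_congr fun t => ?_
    split_ifs with h
    · rfl
    · exact ENNReal.ofReal_zero
  have R4 : (∑' q : ℕ × ℕ × ℕ × ℕ,
      if 1 ≤ q.2.2.2 ∧ q.2.2.2 < q.2.2.1 ∧ q.2.2.1 < q.2.1 ∧ q.2.1 < q.1 then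
      (1 : ℝ) / ((q.1 : ℝ) ^ n * (q.2.1 : ℝ) * (q.2.2.1 : ℝ) * (q.2.2.2 : ℝ)) else 0)
      = T4.toReal := by
    rw [hT4, ← tsum_ofReal_toReal (f := fun q : ℕ × ℕ × ℕ × ℕ =>
      if 1 ≤ q.2.2.2 ∧ q.2.2.2 < q.2.2.1 ∧ q.2.2.1 < q.2.1 ∧ q.2.1 < q.1 then
      (1 : ℝ) / ((q.1 : ℝ) ^ n * (q.2.1 : ℝ) * (q.2.2.1 : ℝ) * (q.2.2.2 : ℝ)) else 0)
      (fun q => by positivity)]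
    congr 1
    refine tsum_congr fun q => ?_
    split_ifs with h
    · rfl
    · exact ENNReal.ofReal_zero
  have hL : (∑' k : ℕ, (∑ j ∈ Finset.Icc 1 (k + 1), (1 : ℝ) / j) ^ 3 / ((k : ℝ) + 2) ^ n)
      = (∑' k : ℕ, ENNReal.ofReal
        ((∑ j ∈ Finset.Icc 1 (k + 1), (1 : ℝ) / j) ^ 3 / ((k : ℝ) + 2) ^ n)).toReal :=
    (tsum_ofReal_toReal g_nonneg).symm
  rw [hL, key, R1, R2, R3, R4, ENNReal.toReal_add h1f (by
      exact ENNReal.add_ne_top.mpr ⟨h2f, ENNReal.add_ne_top.mpr ⟨h3f, h4f⟩⟩),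
    ENNReal.toReal_add h2f (ENNReal.add_ne_top.mpr ⟨h3f, h4f⟩),
    ENNReal.toReal_add h3f h4f, ENNReal.toReal_mul, ENNReal.toReal_mul, ENNReal.toReal_mul]
  norm_num
  ring
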